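/- Let E = ℂ² with basis e₁, e₂, equipped with the dendriform algebra structure Dend₂³ given by the bilinear operations ≺, ≻ determined on basis elements by e₁ ≺ e₁ = e₁, e₂ ≺ e₁ = e₂, e₁ ≻ e₂ = e₂, e₂ ≻ e₁ = −e₂ (all other products of basis elements are 0). Then every linear operator P : E → E is a Nijenhuis operator on (E, ≺, ≻). -/

import Mathlib

/-!
The operation `≺` of Dend₂³ is `x ≺ y = y₁ • x`, and for any product of the form
`x ≺ y = φ y • x` both sides of the Nijenhuis identity reduce to `φ (P v) • P u`.
The operation `≻` is `x ≻ y = det(x, y) • e₂`. In dimension two,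
`det(P x, P y) = det P · det(x, y)` and `det(P x, y) + det(x, P y) = tr P · det(x, y)`,
so the Nijenhuis identity for `≻` becomes `det P • e₂ = tr P • P e₂ - P (P e₂)`,
which is the Cayley–Hamilton theorem for `P`.
-/

open Module

variable {R M : Type*} [CommRing R] [AddCommGroup M] [Module R M]

def IsNijenhuis (μ : M →ₗ[R] M →ₗ[R] M) (P : M →ₗ[R] M) : Prop :=
  ∀ u v, μ (P u) (P v) = P (μ (P u) v + μ u (P v) - P (μ u v))

theorem isNijenhuis_of_apply_eq_smul_self (μ : M →ₗ[R] M →ₗ[R] M) (φ : M →ₗ[R] R)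
    (hμ : ∀ x y, μ x y = φ y • x) (P : M →ₗ[R] M) : IsNijenhuis μ P := by
  intro u v
  simp only [hμ, map_smul, add_sub_cancel_left]

theorem apply_apply_eq_sum_finTwoProd (B : (R × R) →ₗ[R] (R × R) →ₗ[R] M) (x y : R × R) :
    B x y = (x.1 * y.1) • B (1, 0) (1, 0) + (x.1 * y.2) • B (1, 0) (0, 1)
      + (x.2 * y.1) • B (0, 1) (1, 0) + (x.2 * y.2) • B (0, 1) (0, 1) := by
  rw [← LinearMap.sum_repr_mul_repr_mul (Basis.finTwoProd R) (Basis.finTwoProd R) x y]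
  simp [Finsupp.sum_fintype, Fin.sum_univ_two, mul_smul, add_assoc]

def det₂ (x y : R × R) : R := x.1 * y.2 - x.2 * y.1

theorem exists_eq_toLin_finTwoProd (P : (R × R) →ₗ[R] R × R) :
    ∃ a b c d : R, P = Matrix.toLin (Basis.finTwoProd R) (Basis.finTwoProd R) !![a, b; c, d] :=
  ⟨_, _, _, _, by rw [← Matrix.eta_fin_two (LinearMap.toMatrix _ _ P), Matrix.toLin_toMatrix]⟩

section finTwoProd

variable (P : (R × R) →ₗ[R] R × R)

theorem det₂_map_map (x y : R × R) : det₂ (P x) (P y) = LinearMap.det P * det₂ x y := by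
  obtain ⟨a, b, c, d, rfl⟩ := exists_eq_toLin_finTwoProd P
  simp only [det₂, LinearMap.det_toLin, Matrix.det_fin_two_of, Matrix.toLin_finTwoProd_apply]
  ring

theorem det₂_map_add_det₂_map (x y : R × R) :
    det₂ (P x) y + det₂ x (P y) = LinearMap.trace R _ P * det₂ x y := by
  obtain ⟨a, b, c, d, rfl⟩ := exists_eq_toLin_finTwoProd P
  simp only [det₂, LinearMap.trace_eq_matrix_trace R (Basis.finTwoProd R), LinearMap.toMatrix_toLin,
    Matrix.trace_fin_two_of, Matrix.toLin_finTwoProd_apply]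
  ring

theorem map_map_eq_trace_smul_sub_det_smul (w : R × R) :
    P (P w) = LinearMap.trace R _ P • P w - LinearMap.det P • w := by
  obtain ⟨a, b, c, d, rfl⟩ := exists_eq_toLin_finTwoProd P
  simp only [LinearMap.trace_eq_matrix_trace R (Basis.finTwoProd R), LinearMap.toMatrix_toLin,
    Matrix.trace_fin_two_of, LinearMap.det_toLin, Matrix.det_fin_two_of,
    Matrix.toLin_finTwoProd_apply, Prod.ext_iff, Prod.smul_fst, Prod.smul_snd, Prod.fst_sub,
    Prod.snd_sub, smul_eq_mul]
  constructor <;> ring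

end finTwoProd

theorem isNijenhuis_of_apply_eq_det₂_smul (μ : (R × R) →ₗ[R] (R × R) →ₗ[R] R × R) (w : R × R)
    (hμ : ∀ x y, μ x y = det₂ x y • w) (P : (R × R) →ₗ[R] R × R) : IsNijenhuis μ P := by
  intro u v
  simp only [hμ, map_smul, map_sub, ← add_smul, det₂_map_add_det₂_map, det₂_map_map,
    map_map_eq_trace_smul_sub_det_smul]
  module

theorem stmt_16
    (l r : (ℂ × ℂ) →ₗ[ℂ] (ℂ × ℂ) →ₗ[ℂ] (ℂ × ℂ))
    (P : (ℂ × ℂ) →ₗ[ℂ] (ℂ × ℂ))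
    (e₁ e₂ : ℂ × ℂ)
    (he₁ : e₁ = (1, 0)) (he₂ : e₂ = (0, 1))
    (hl11 : l e₁ e₁ = e₁)
    (hl12 : l e₁ e₂ = 0)
    (hl21 : l e₂ e₁ = e₂)
    (hl22 : l e₂ e₂ = 0)
    (hr11 : r e₁ e₁ = 0)
    (hr12 : r e₁ e₂ = e₂)
    (hr21 : r e₂ e₁ = -e₂)
    (hr22 : r e₂ e₂ = 0) :
    ∀ u v : ℂ × ℂ,
        l (P u) (P v) = P (l (P u) v + l u (P v) - P (l u v)) ∧
        r (P u) (P v) = P (r (P u) v + r u (P v) - P (r u v)) := by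
  subst he₁ he₂
  have hl : ∀ x y : ℂ × ℂ, l x y = LinearMap.fst ℂ ℂ ℂ y • x := by
    intro x y
    rw [apply_apply_eq_sum_finTwoProd, hl11, hl12, hl21, hl22]
    simp [Prod.ext_iff, mul_comm]
  have hr : ∀ x y : ℂ × ℂ, r x y = det₂ x y • (0, 1) := by
    intro x y
    rw [apply_apply_eq_sum_finTwoProd, hr11, hr12, hr21, hr22, det₂]
    module
  exact fun u v => ⟨isNijenhuis_of_apply_eq_smul_self l _ hl P u v,
    isNijenhuis_of_apply_eq_det₂_smul r _ hr P u v⟩
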